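/- arXiv:1208.1239 — 4 statements merged into one kernel-verified Lean document; each statement's English description precedes it below -/
import Mathlib

section
/- Suppose that for all (x,y) ∈ (A×B) ∪ (B×A) and all n one has d(Tⁿx,Tⁿy) ≤ d(x,y) and d(Tⁿx,Tⁿy)² ≤ αₙ·d(x,y)² + βₙ·(d(x,y)² + d(Tⁿx,Tⁿy)²) + 2μₙβₙ·d(x,y)·d(Tⁿx,Tⁿy) + ξₙ(x,y) + γₙ·D², where ξₙ(x,y) := max{0, (1−βₙ)·d(Tⁿx,Tⁿy)² − (αₙ+βₙ)·d(x,y)² − 2μₙβₙ·d(x,y)·d(Tⁿx,Tⁿy)}, with ξₙ(x,y) → 0, γₙ(x,y) → 0, limsup_{n→∞} βₙ·max{1,1+2μₙ} < 1, and αₙ + 2βₙ(1+μₙ) → 1 as n → ∞. Then for every (x,y) ∈ (A×B) ∪ (B×A) the limit lim_{n→∞} d(Tⁿx,Tⁿy) exists and lies in [D, d(x,y)]. (Theorem 3.1(ii).) -/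
open Filter Topology

/-- Theorem 3.1(ii): under the cross-term cyclic contractive condition with
`d(Tⁿx,Tⁿy) ≤ d(x,y)`, the limit `lim_n d(Tⁿx,Tⁿy)` exists and lies in
`[D, d(x,y)]` for every pair `(x,y) ∈ (A×B) ∪ (B×A)`. -/
theorem thm3_1_ii {X : Type*} [MetricSpace X] (A B : Set X) (hA : A.Nonempty) (hB : B.Nonempty)
    (T : X → X) (hTA : Set.MapsTo T A B) (hTB : Set.MapsTo T B A)
    (D : ℝ) (hD : D = sInf (Set.image2 dist A B))
    (α β μ γ ξ : ℕ → X → X → ℝ)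
    (hα : ∀ n x y, (x ∈ A ∧ y ∈ B) ∨ (x ∈ B ∧ y ∈ A) → 0 ≤ α n x y)
    (hβ : ∀ n x y, (x ∈ A ∧ y ∈ B) ∨ (x ∈ B ∧ y ∈ A) → 0 < β n x y)
    (hγ : ∀ n x y, (x ∈ A ∧ y ∈ B) ∨ (x ∈ B ∧ y ∈ A) → 0 ≤ γ n x y)
    (hnonexp : ∀ n x y, (x ∈ A ∧ y ∈ B) ∨ (x ∈ B ∧ y ∈ A) →
      dist (T^[n] x) (T^[n] y) ≤ dist x y)
    (hξdef : ∀ n x y, (x ∈ A ∧ y ∈ B) ∨ (x ∈ B ∧ y ∈ A) → ξ n x y =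
      max 0 ((1 - β n x y) * dist (T^[n] x) (T^[n] y) ^ 2
        - (α n x y + β n x y) * dist x y ^ 2
        - 2 * μ n x y * β n x y * dist x y * dist (T^[n] x) (T^[n] y)))
    (hineq : ∀ n x y, (x ∈ A ∧ y ∈ B) ∨ (x ∈ B ∧ y ∈ A) →
      dist (T^[n] x) (T^[n] y) ^ 2 ≤
        α n x y * dist x y ^ 2
        + β n x y * (dist x y ^ 2 + dist (T^[n] x) (T^[n] y) ^ 2)
        + 2 * μ n x y * β n x y * dist x y * dist (T^[n] x) (T^[n] y)
        + ξ n x y + γ n x y * D ^ 2)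
    (hξ0 : ∀ x y, (x ∈ A ∧ y ∈ B) ∨ (x ∈ B ∧ y ∈ A) → Tendsto (fun n => ξ n x y) atTop (nhds 0))
    (hγ0 : ∀ x y, (x ∈ A ∧ y ∈ B) ∨ (x ∈ B ∧ y ∈ A) → Tendsto (fun n => γ n x y) atTop (nhds 0))
    (hlimsup : ∀ x y, (x ∈ A ∧ y ∈ B) ∨ (x ∈ B ∧ y ∈ A) →
      limsup (fun n => β n x y * max 1 (1 + 2 * μ n x y)) atTop < 1)
    (hK3 : ∀ x y, (x ∈ A ∧ y ∈ B) ∨ (x ∈ B ∧ y ∈ A) →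
      Tendsto (fun n => α n x y + 2 * β n x y * (1 + μ n x y)) atTop (nhds 1)) :
    ∀ x y : X, (x ∈ A ∧ y ∈ B) ∨ (x ∈ B ∧ y ∈ A) →
      ∃ L : ℝ, Tendsto (fun n => dist (T^[n] x) (T^[n] y)) atTop (nhds L) ∧
        D ≤ L ∧ L ≤ dist x y := by
  intro x y hxy
  -- membership alternation
  have hmem : ∀ m : ℕ, (T^[m] x ∈ A ∧ T^[m] y ∈ B) ∨ (T^[m] x ∈ B ∧ T^[m] y ∈ A) := by
    intro m
    induction m with
    | zero => simpa using hxy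
    | succ m ih =>
      rw [Function.iterate_succ_apply', Function.iterate_succ_apply']
      rcases ih with ⟨h1, h2⟩ | ⟨h1, h2⟩
      · exact Or.inr ⟨hTA h1, hTB h2⟩
      · exact Or.inl ⟨hTB h1, hTA h2⟩
  -- antitone
  have hanti : Antitone (fun n => dist (T^[n] x) (T^[n] y)) := by
    refine antitone_nat_of_succ_le ?_
    intro m
    have := hnonexp 1 (T^[m] x) (T^[m] y) (hmem m)
    simpa [Function.iterate_succ_apply', Function.iterate_one] using this
  -- lower bound by D
  have hDle : ∀ n, D ≤ dist (T^[n] x) (T^[n] y) := by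
    intro n
    have hbdd : BddBelow (Set.image2 dist A B) := by
      refine ⟨0, ?_⟩
      rintro r ⟨a, ha, b, hb, rfl⟩
      exact dist_nonneg
    rcases hmem n with ⟨h1, h2⟩ | ⟨h1, h2⟩
    · exact hD ▸ csInf_le hbdd ⟨_, h1, _, h2, rfl⟩
    · rw [dist_comm]
      exact hD ▸ csInf_le hbdd ⟨_, h2, _, h1, rfl⟩
  have hbdd : BddBelow (Set.range fun n => dist (T^[n] x) (T^[n] y)) := by
    refine ⟨D, ?_⟩
    rintro r ⟨n, rfl⟩
    exact hDle n
  refine ⟨⨅ n, dist (T^[n] x) (T^[n] y), tendsto_atTop_ciInf hanti hbdd, ?_, ?_⟩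
  · exact le_ciInf hDle
  · have := ciInf_le hbdd 0
    simpa using this
end

section
/- Suppose there are sequences kₙ ∈ [0,1) and εₙ ≥ 0 with εₙ/(1−kₙ) → 0 as n → ∞ such that d(Tⁿx,Tⁿy)² ≤ kₙ·d(x,y)² + (1−kₙ)·D² + εₙ for all (x,y) ∈ (A×B) ∪ (B×A) and all n (this is the strict contractive condition (3.1)–(3.2) with kₙ = (αₙ+βₙ(1+2μₙ))/(1−βₙ) ∈ [0,1) and γₙ = o(1−βₙ)). Then lim_{n→∞} d(Tⁿx,Tⁿy) = D for every (x,y) ∈ (A×B) ∪ (B×A), and lim_{n→∞} d(Tⁿx, T^{n+1}x) = D for every x ∈ A∪B. (Theorem 3.3(i).) -/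
open Filter Topology

/-! For a pair `(x, y)` in `(A × B) ∪ (B × A)` put `aₘ = d(Tᵐx, Tᵐy)² - D² ≥ 0`. Iterates of such a
pair stay in `(A × B) ∪ (B × A)`, so the contractive condition gives `aₙ₊ₘ ≤ kₙ aₘ + εₙ` for all
`n, m`. Iterating with a fixed step `n` shows that, for every `δ > 0`, `aₘ` is eventually at
most `εₙ / (1 - kₙ) + δ`, and `εₙ / (1 - kₙ) → 0`. The second claim is the first one
for the pair `(x, Tx)`. -/

lemma le_pow_mul_add_div_of_le_mul_add {a : ℕ → ℝ} {p : ℕ} {k c : ℝ} (hk0 : 0 ≤ k) (hk1 : k < 1)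
    (hc : 0 ≤ c) (h : ∀ m, a (p + m) ≤ k * a m + c) (j m : ℕ) :
    a (p * j + m) ≤ k ^ j * a m + c / (1 - k) := by
  have hfix : k * (c / (1 - k)) + c = c / (1 - k) := by
    field_simp [(sub_pos.2 hk1).ne']
    ring
  induction j with
  | zero => simpa using div_nonneg hc (sub_pos.2 hk1).le
  | succ j ih =>
    calc a (p * (j + 1) + m) = a (p + (p * j + m)) := by ring_nf
      _ ≤ k * a (p * j + m) + c := h _
      _ ≤ k * (k ^ j * a m + c / (1 - k)) + c := by gcongr
      _ = k ^ (j + 1) * a m + c / (1 - k) := by linear_combination hfix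

lemma eventually_le_div_add_of_le_mul_add {a : ℕ → ℝ} {p : ℕ} {k c δ : ℝ} (ha : ∀ m, 0 ≤ a m)
    (hp : p ≠ 0) (hk0 : 0 ≤ k) (hk1 : k < 1) (hc : 0 ≤ c) (h : ∀ m, a (p + m) ≤ k * a m + c)
    (hδ : 0 < δ) : ∀ᶠ N in atTop, a N ≤ c / (1 - k) + δ := by
  set C := ∑ m ∈ Finset.range p, a m
  have hC : ∀ m < p, a m ≤ C := fun m hm =>
    Finset.single_le_sum (fun i _ => ha i) (Finset.mem_range.2 hm)
  have hpow : Tendsto (fun N => k ^ (N / p) * C) atTop (𝓝 0) := by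
    simpa using ((tendsto_pow_atTop_nhds_zero_of_lt_one hk0 hk1).comp
      (Nat.tendsto_div_const_atTop hp)).mul_const C
  filter_upwards [hpow.eventually (ge_mem_nhds hδ)] with N hN
  have hsplit := le_pow_mul_add_div_of_le_mul_add hk0 hk1 hc h (N / p) (N % p)
  rw [Nat.div_add_mod] at hsplit
  calc a N ≤ k ^ (N / p) * a (N % p) + c / (1 - k) := hsplit
    _ ≤ k ^ (N / p) * C + c / (1 - k) := by
      gcongr
      exact hC _ (Nat.mod_lt _ (Nat.pos_of_ne_zero hp))
    _ ≤ c / (1 - k) + δ := by linarith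

theorem tendsto_zero_of_le_mul_add {a k ε : ℕ → ℝ} (ha : ∀ m, 0 ≤ a m) (hk0 : ∀ n, 0 ≤ k n)
    (hk1 : ∀ n, k n < 1) (hke : Tendsto (fun n => ε n / (1 - k n)) atTop (𝓝 0))
    (h : ∀ n m, a (n + m) ≤ k n * a m + ε n) : Tendsto a atTop (𝓝 0) := by
  refine tendsto_order.2 ⟨fun b hb => .of_forall fun m => hb.trans_le (ha m), fun δ hδ => ?_⟩
  have habs : Tendsto (fun n => |ε n| / (1 - k n)) atTop (𝓝 0) := by
    simpa [abs_div, abs_of_pos (sub_pos.2 (hk1 _))] using hke.abs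
  obtain ⟨n, hsmall, hn⟩ :=
    ((habs.eventually (gt_mem_nhds (half_pos hδ))).and (eventually_ne_atTop 0)).exists
  have hstep : ∀ m, a (n + m) ≤ k n * a m + |ε n| := fun m =>
    (h n m).trans (by gcongr; exact le_abs_self _)
  filter_upwards [eventually_le_div_add_of_le_mul_add ha hn (hk0 n) (hk1 n) (abs_nonneg _) hstep
    (half_pos hδ)] with N hN
  linarith

lemma tendsto_of_tendsto_sq {α : Type*} {l : Filter α} {f : α → ℝ} {D : ℝ} (hf : ∀ x, 0 ≤ f x)
    (hD : 0 ≤ D) (h : Tendsto (fun x => f x ^ 2) l (𝓝 (D ^ 2))) : Tendsto f l (𝓝 D) := by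
  simpa [Real.sqrt_sq, hf, hD] using h.sqrt

lemma sInf_image2_dist_le {X : Type*} [PseudoMetricSpace X] {A B : Set X} {a b : X} (ha : a ∈ A)
    (hb : b ∈ B) : sInf (Set.image2 dist A B) ≤ dist a b :=
  csInf_le ⟨0, Set.forall_mem_image2.2 fun _ _ _ _ => dist_nonneg⟩ (Set.mem_image2_of_mem ha hb)

lemma sInf_image2_dist_nonneg {X : Type*} [PseudoMetricSpace X] (A B : Set X) :
    0 ≤ sInf (Set.image2 dist A B) :=
  Real.sInf_nonneg (Set.forall_mem_image2.2 fun _ _ _ _ => dist_nonneg)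

section Cyclic

variable {X : Type*} {A B : Set X} {T : X → X}

lemma iterate_mem_cyclic_pair (hTA : Set.MapsTo T A B) (hTB : Set.MapsTo T B A) {x y : X}
    (hxy : (x ∈ A ∧ y ∈ B) ∨ (x ∈ B ∧ y ∈ A)) (n : ℕ) :
    (T^[n] x ∈ A ∧ T^[n] y ∈ B) ∨ (T^[n] x ∈ B ∧ T^[n] y ∈ A) := by
  have hmaps : Set.MapsTo (Prod.map T T) (A ×ˢ B ∪ B ×ˢ A) (A ×ˢ B ∪ B ×ˢ A) :=
    Set.union_comm (A ×ˢ B) _ ▸ (hTA.prodMap hTB).union_union (hTB.prodMap hTA)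
  simpa [Prod.map_iterate] using hmaps.iterate n (show (x, y) ∈ A ×ˢ B ∪ B ×ˢ A from hxy)

theorem tendsto_dist_iterate_of_sq_contraction [PseudoMetricSpace X] (hTA : Set.MapsTo T A B)
    (hTB : Set.MapsTo T B A) {D : ℝ} (hD0 : 0 ≤ D) (hDle : ∀ a ∈ A, ∀ b ∈ B, D ≤ dist a b)
    {k ε : ℕ → ℝ} (hk0 : ∀ n, 0 ≤ k n) (hk1 : ∀ n, k n < 1)
    (hke : Tendsto (fun n => ε n / (1 - k n)) atTop (𝓝 0))
    (hineq : ∀ n x y, (x ∈ A ∧ y ∈ B) ∨ (x ∈ B ∧ y ∈ A) →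
      dist (T^[n] x) (T^[n] y) ^ 2 ≤ k n * dist x y ^ 2 + (1 - k n) * D ^ 2 + ε n)
    {x y : X} (hxy : (x ∈ A ∧ y ∈ B) ∨ (x ∈ B ∧ y ∈ A)) :
    Tendsto (fun n => dist (T^[n] x) (T^[n] y)) atTop (𝓝 D) := by
  set d := fun n => dist (T^[n] x) (T^[n] y)
  have hDd : ∀ m, D ≤ d m := fun m => by
    rcases iterate_mem_cyclic_pair hTA hTB hxy m with ⟨hx, hy⟩ | ⟨hx, hy⟩
    · exact hDle _ hx _ hy
    · exact (hDle _ hy _ hx).trans_eq (dist_comm _ _)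
  have hstep : ∀ n m, d (n + m) ^ 2 - D ^ 2 ≤ k n * (d m ^ 2 - D ^ 2) + ε n := fun n m => by
    have := hineq n _ _ (iterate_mem_cyclic_pair hTA hTB hxy m)
    simp only [d, Function.iterate_add_apply]
    linarith
  have hsq := tendsto_zero_of_le_mul_add (fun m => sub_nonneg.2 (pow_le_pow_left₀ hD0 (hDd m) 2))
    hk0 hk1 hke hstep
  have hd2 : Tendsto (fun n => d n ^ 2) atTop (𝓝 (D ^ 2)) := by
    simpa only [zero_add] using (hsq.add_const (D ^ 2)).congr fun n => sub_add_cancel _ _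
  exact tendsto_of_tendsto_sq (fun _ => dist_nonneg) hD0 hd2

end Cyclic

theorem thm3_3_i_general {X : Type*} [MetricSpace X] (A B : Set X)
    (T : X → X) (hTA : Set.MapsTo T A B) (hTB : Set.MapsTo T B A)
    (D : ℝ) (hD : D = sInf (Set.image2 dist A B))
    (k ε : ℕ → ℝ)
    (hk : ∀ n, 0 ≤ k n ∧ k n < 1)
    (hke : Tendsto (fun n => ε n / (1 - k n)) atTop (nhds 0))
    (hineq : ∀ n x y, (x ∈ A ∧ y ∈ B) ∨ (x ∈ B ∧ y ∈ A) →
      dist (T^[n] x) (T^[n] y) ^ 2 ≤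
        k n * dist x y ^ 2 + (1 - k n) * D ^ 2 + ε n) :
    (∀ x y : X, (x ∈ A ∧ y ∈ B) ∨ (x ∈ B ∧ y ∈ A) →
      Tendsto (fun n => dist (T^[n] x) (T^[n] y)) atTop (nhds D)) ∧
    (∀ x ∈ A ∪ B, Tendsto (fun n => dist (T^[n] x) (T^[n + 1] x)) atTop (nhds D)) := by
  have hpair : ∀ x y : X, (x ∈ A ∧ y ∈ B) ∨ (x ∈ B ∧ y ∈ A) →
      Tendsto (fun n => dist (T^[n] x) (T^[n] y)) atTop (𝓝 D) :=
    fun x y => tendsto_dist_iterate_of_sq_contraction hTA hTB (hD ▸ sInf_image2_dist_nonneg A B)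
      (fun _ ha _ hb => hD ▸ sInf_image2_dist_le ha hb) (fun n => (hk n).1) (fun n => (hk n).2)
      hke hineq
  refine ⟨hpair, fun x hx => ?_⟩
  simp_rw [Function.iterate_succ_apply]
  rcases hx with hx | hx
  exacts [hpair x (T x) (Or.inl ⟨hx, hTA hx⟩), hpair x (T x) (Or.inr ⟨hx, hTB hx⟩)]

/-- Theorem 3.3(i): under the strict cyclic contractive condition,
`d(Tⁿx,Tⁿy) → D` for every pair `(x,y) ∈ (A×B) ∪ (B×A)` and
`d(Tⁿx, T^{n+1}x) → D` for every `x ∈ A ∪ B`. -/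
theorem thm3_3_i {X : Type*} [MetricSpace X] (A B : Set X) (hA : A.Nonempty) (hB : B.Nonempty)
    (T : X → X) (hTA : Set.MapsTo T A B) (hTB : Set.MapsTo T B A)
    (D : ℝ) (hD : D = sInf (Set.image2 dist A B))
    (k ε : ℕ → ℝ)
    (hk : ∀ n, 0 ≤ k n ∧ k n < 1) (hε : ∀ n, 0 ≤ ε n)
    (hke : Tendsto (fun n => ε n / (1 - k n)) atTop (nhds 0))
    (hineq : ∀ n x y, (x ∈ A ∧ y ∈ B) ∨ (x ∈ B ∧ y ∈ A) →
      dist (T^[n] x) (T^[n] y) ^ 2 ≤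
        k n * dist x y ^ 2 + (1 - k n) * D ^ 2 + ε n) :
    (∀ x y : X, (x ∈ A ∧ y ∈ B) ∨ (x ∈ B ∧ y ∈ A) →
      Tendsto (fun n => dist (T^[n] x) (T^[n] y)) atTop (nhds D)) ∧
    (∀ x ∈ A ∪ B, Tendsto (fun n => dist (T^[n] x) (T^[n + 1] x)) atTop (nhds D)) :=
  thm3_3_i_general A B T hTA hTB D hD k ε hk hke hineq
end

section
/- Suppose T satisfies the cyclic condition (C3) with βₙ(x,y) = β for a constant β ∈ (0,1), αₙ(x,y) ∈ [1,∞) with αₙ(x,y) → 1, and μₙ(x,y) ∈ [−1,(1−β)/(2β)) with μₙ(x,y) → −1 as n → ∞ (i.e. T is a cyclic asymptotically β-strictly pseudocontractive mapping in the intermediate sense). Then T is asymptotically nonexpansive: for every (x,y) ∈ (A×B) ∪ (B×A) the limit lim_{n→∞} d(Tⁿx,Tⁿy) exists and lies in [D, d(x,y)]. (Theorem 3.5(iii).) -/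
open Filter Topology

/-- Theorem 3.5(iii): if `T` satisfies (C3) with `βₙ(x,y) = β` for a constant
`β ∈ (0,1)`, `αₙ(x,y) ∈ [1,∞)` with `αₙ → 1`, and `μₙ(x,y) → -1` (cyclic
asymptotically `β`-strictly pseudocontractive in the intermediate sense), then
`T` is asymptotically nonexpansive: `lim_n d(Tⁿx,Tⁿy)` exists in `[D, d(x,y)]`
for every pair `(x,y) ∈ (A×B) ∪ (B×A)`. -/
theorem thm3_5_iii {X : Type*} [NormedAddCommGroup X] [NormedSpace ℝ X]
    [UniformConvexSpace X] [CompleteSpace X]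
    (A B : Set X) (hA : A.Nonempty) (hB : B.Nonempty)
    (hAc : IsClosed A) (hBc : IsClosed B) (hAconv : Convex ℝ A) (hBconv : Convex ℝ B)
    (T : X → X) (hTA : Set.MapsTo T A B) (hTB : Set.MapsTo T B A)
    (D : ℝ) (hD : D = sInf (Set.image2 dist A B))
    (α β μ γ ξ : ℕ → X → X → ℝ)
    (hα : ∀ n x y, (x ∈ A ∧ y ∈ B) ∨ (x ∈ B ∧ y ∈ A) → 0 ≤ α n x y)
    (hβ : ∀ n x y, (x ∈ A ∧ y ∈ B) ∨ (x ∈ B ∧ y ∈ A) → 0 < β n x y ∧ β n x y ≤ 1)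
    (hμ : ∀ n x y, (x ∈ A ∧ y ∈ B) ∨ (x ∈ B ∧ y ∈ A) →
      -1 ≤ μ n x y ∧ μ n x y < (1 - β n x y) / (2 * β n x y))
    (hγ : ∀ n x y, (x ∈ A ∧ y ∈ B) ∨ (x ∈ B ∧ y ∈ A) → 0 ≤ γ n x y)
    (hξdef : ∀ n x y, (x ∈ A ∧ y ∈ B) ∨ (x ∈ B ∧ y ∈ A) → ξ n x y =
      max 0 ((1 - β n x y * (1 + 2 * μ n x y)) * dist (T^[n] x) (T^[n] y) ^ 2
        - (α n x y + β n x y) * dist x y ^ 2))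
    (hineq : ∀ n x y, (x ∈ A ∧ y ∈ B) ∨ (x ∈ B ∧ y ∈ A) →
      dist (T^[n] x) (T^[n] y) ^ 2 ≤
        α n x y * dist x y ^ 2
        + β n x y * (dist x y ^ 2 + dist (T^[n] x) (T^[n] y) ^ 2)
        + 2 * μ n x y * β n x y * dist (T^[n] x) (T^[n] y) ^ 2
        + ξ n x y + γ n x y * D ^ 2)
    (hξ0 : ∀ x y, (x ∈ A ∧ y ∈ B) ∨ (x ∈ B ∧ y ∈ A) → Tendsto (fun n => ξ n x y) atTop (nhds 0))
    (hγ0 : ∀ x y, (x ∈ A ∧ y ∈ B) ∨ (x ∈ B ∧ y ∈ A) → Tendsto (fun n => γ n x y) atTop (nhds 0))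
    (hK2 : ∀ n x y, (x ∈ A ∧ y ∈ B) ∨ (x ∈ B ∧ y ∈ A) →
      (1 - α n x y - 2 * β n x y) / (2 * β n x y) ≤ μ n x y)
    (hK3 : ∀ x y, (x ∈ A ∧ y ∈ B) ∨ (x ∈ B ∧ y ∈ A) →
      Tendsto (fun n => α n x y + 2 * β n x y * (1 + μ n x y)) atTop (nhds 1))
    (b : ℝ) (hb : 0 < b ∧ b < 1)
    (hβconst : ∀ n x y, (x ∈ A ∧ y ∈ B) ∨ (x ∈ B ∧ y ∈ A) → β n x y = b)
    (hα1 : ∀ n x y, (x ∈ A ∧ y ∈ B) ∨ (x ∈ B ∧ y ∈ A) → 1 ≤ α n x y)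
    (hαlim : ∀ x y, (x ∈ A ∧ y ∈ B) ∨ (x ∈ B ∧ y ∈ A) → Tendsto (fun n => α n x y) atTop (nhds 1))
    (hμlim : ∀ x y, (x ∈ A ∧ y ∈ B) ∨ (x ∈ B ∧ y ∈ A) → Tendsto (fun n => μ n x y) atTop (nhds (-1))) :
    ∀ x y : X, (x ∈ A ∧ y ∈ B) ∨ (x ∈ B ∧ y ∈ A) →
      ∃ L : ℝ, Tendsto (fun n => dist (T^[n] x) (T^[n] y)) atTop (nhds L) ∧
        D ≤ L ∧ L ≤ dist x y := by
  intro x y hxy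
  -- membership propagation under iterates
  have hmem : ∀ (u v : X), ((u ∈ A ∧ v ∈ B) ∨ (u ∈ B ∧ v ∈ A)) → ∀ n : ℕ,
      ((T^[n] u ∈ A ∧ T^[n] v ∈ B) ∨ (T^[n] u ∈ B ∧ T^[n] v ∈ A)) := by
    intro u v huv n
    induction n with
    | zero => simpa using huv
    | succ n ih =>
      rw [Function.iterate_succ_apply', Function.iterate_succ_apply']
      rcases ih with ⟨h1, h2⟩ | ⟨h1, h2⟩
      · exact Or.inr ⟨hTA h1, hTB h2⟩
      · exact Or.inl ⟨hTB h1, hTA h2⟩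
  -- D is a lower bound for distances across the sets
  have hDle : ∀ (u v : X), ((u ∈ A ∧ v ∈ B) ∨ (u ∈ B ∧ v ∈ A)) → D ≤ dist u v := by
    intro u v huv
    have hbdd : BddBelow (Set.image2 dist A B) := by
      refine ⟨0, ?_⟩
      rintro z ⟨a, ha, c, hc, rfl⟩
      exact dist_nonneg
    rw [hD]
    rcases huv with ⟨h1, h2⟩ | ⟨h1, h2⟩
    · exact csInf_le hbdd ⟨u, h1, v, h2, rfl⟩
    · rw [dist_comm]
      exact csInf_le hbdd ⟨v, h2, u, h1, rfl⟩
  -- key estimate: for each admissible pair, eventually dist(Tⁿu, Tⁿv) ≤ dist u v + ε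
  have key : ∀ (u v : X), ((u ∈ A ∧ v ∈ B) ∨ (u ∈ B ∧ v ∈ A)) → ∀ ε : ℝ, 0 < ε →
      ∀ᶠ n in atTop, dist (T^[n] u) (T^[n] v) ≤ dist u v + ε := by
    intro u v huv ε hε
    set d := dist u v with hd
    have hdnn : 0 ≤ d := dist_nonneg
    have hg : Tendsto (fun n => (α n u v + b) * d ^ 2 + ξ n u v + γ n u v * D ^ 2
        - (1 - b * (1 + 2 * μ n u v)) * (d ^ 2 + ε ^ 2)) atTop
        (nhds (((1 + b) * d ^ 2 + 0 + 0 * D ^ 2 - (1 + b) * (d ^ 2 + ε ^ 2)))) := by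
      have h1 : Tendsto (fun n => (α n u v + b) * d ^ 2) atTop (nhds ((1 + b) * d ^ 2)) :=
        ((hαlim u v huv).add tendsto_const_nhds).mul tendsto_const_nhds
      have h2 : Tendsto (fun n => γ n u v * D ^ 2) atTop (nhds (0 * D ^ 2)) :=
        (hγ0 u v huv).mul tendsto_const_nhds
      have h3 : Tendsto (fun n => (1 - b * (1 + 2 * μ n u v)) * (d ^ 2 + ε ^ 2)) atTop
          (nhds ((1 - b * (1 + 2 * (-1))) * (d ^ 2 + ε ^ 2))) := by
        exact (tendsto_const_nhds.sub (tendsto_const_nhds.mul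
          (tendsto_const_nhds.add (tendsto_const_nhds.mul (hμlim u v huv))))).mul
          tendsto_const_nhds
      have h3' : (1 - b * (1 + 2 * (-1 : ℝ))) = 1 + b := by ring
      rw [h3'] at h3
      exact ((h1.add (hξ0 u v huv)).add h2).sub h3
    have hneg : (1 + b) * d ^ 2 + 0 + 0 * D ^ 2 - (1 + b) * (d ^ 2 + ε ^ 2) < 0 := by
      nlinarith [hb.1, hε, sq_nonneg ε]
    have hev : ∀ᶠ n in atTop, (α n u v + b) * d ^ 2 + ξ n u v + γ n u v * D ^ 2
        - (1 - b * (1 + 2 * μ n u v)) * (d ^ 2 + ε ^ 2) < 0 :=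
      hg.eventually_lt_const hneg
    filter_upwards [hev] with n hgn
    set f := dist (T^[n] u) (T^[n] v) with hf
    have hfnn : 0 ≤ f := dist_nonneg
    have hμn := (hμ n u v huv).2
    rw [hβconst n u v huv] at hμn
    have hmul : μ n u v * (2 * b) < 1 - b :=
      (lt_div_iff₀ (by linarith [hb.1] : (0:ℝ) < 2 * b)).mp hμn
    have hc : 0 < 1 - b * (1 + 2 * μ n u v) := by nlinarith
    have hin := hineq n u v huv
    rw [hβconst n u v huv] at hin
    have h3 : (1 - b * (1 + 2 * μ n u v)) * f ^ 2 ≤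
        (α n u v + b) * d ^ 2 + ξ n u v + γ n u v * D ^ 2 := by nlinarith [hin]
    have h4 : (1 - b * (1 + 2 * μ n u v)) * f ^ 2 <
        (1 - b * (1 + 2 * μ n u v)) * (d ^ 2 + ε ^ 2) := by linarith
    have h5 : f ^ 2 < d ^ 2 + ε ^ 2 := (mul_lt_mul_iff_right₀ hc).mp h4
    nlinarith [hfnn, hdnn, hε, sq_nonneg (f - d - ε)]
  -- the sequence of distances
  set f : ℕ → ℝ := fun n => dist (T^[n] x) (T^[n] y) with hfdef
  have hf0 : f 0 = dist x y := by simp [hfdef]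
  have hfD : ∀ n, D ≤ f n := fun n => hDle _ _ (hmem x y hxy n)
  -- for each m and ε > 0, eventually f n ≤ f m + ε
  have hshift : ∀ (m : ℕ) (ε : ℝ), 0 < ε → ∀ᶠ n in atTop, f n ≤ f m + ε := by
    intro m ε hε
    have := key (T^[m] x) (T^[m] y) (hmem x y hxy m) ε hε
    rw [eventually_atTop] at this ⊢
    obtain ⟨N, hN⟩ := this
    refine ⟨N + m, fun n hn => ?_⟩
    have hNn : N ≤ n - m := by omega
    have h := hN (n - m) hNn
    rw [← Function.iterate_add_apply, ← Function.iterate_add_apply] at h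
    have hnm : n - m + m = n := by omega
    rw [hnm] at h
    exact h
  -- the limit is the infimum of the range of f
  have hne : (Set.range f).Nonempty := Set.range_nonempty f
  have hbdd : BddBelow (Set.range f) := ⟨D, by rintro z ⟨n, rfl⟩; exact hfD n⟩
  set L := sInf (Set.range f) with hL
  have hLle : ∀ n, L ≤ f n := fun n => csInf_le hbdd ⟨n, rfl⟩
  refine ⟨L, ?_, le_csInf hne (by rintro z ⟨n, rfl⟩; exact hfD n), hf0 ▸ hLle 0⟩
  rw [Metric.tendsto_atTop]
  intro ε hε
  obtain ⟨z, ⟨m, rfl⟩, hz⟩ := Real.lt_sInf_add_pos hne (half_pos hε)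
  have := hshift m (ε / 2) (half_pos hε)
  rw [eventually_atTop] at this
  obtain ⟨N, hN⟩ := this
  refine ⟨N, fun n hn => ?_⟩
  have h1 := hN n hn
  have h2 := hLle n
  rw [Real.dist_eq, abs_lt]
  constructor <;> [linarith; linarith [hz]]
end

section
/- Suppose T satisfies the cyclic condition (C3) with βₙ(x,y) ∈ (0,1] and βₙ(x,y) → 1, αₙ(x,y) ∈ [1,∞) with αₙ(x,y) → 1, and μₙ(x,y) ∈ [−1,(1−βₙ)/(2βₙ)) with μₙ(x,y) → −1 as n → ∞ (i.e. T is a cyclic asymptotically pseudocontractive mapping in the intermediate sense). Then T is asymptotically nonexpansive: for every (x,y) ∈ (A×B) ∪ (B×A) the limit lim_{n→∞} d(Tⁿx,Tⁿy) exists and lies in [D, d(x,y)]. (Theorem 3.5(iv).) -/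
open Filter Topology
open Set

/-!
Solving (C3) for `d(Tⁿx,Tⁿy)²` gives
`d(Tⁿx,Tⁿy)² ≤ ((αₙ + βₙ) d(x,y)² + ξₙ + γₙ D²) / (1 - βₙ (1 + 2μₙ))`,
and the right-hand side tends to `2 d(x,y)² / 2`, so `limsup d(Tⁿx,Tⁿy) ≤ d(x,y)`.
Applied to the pair `(Tᵐx, Tᵐy)`, which is again in `A × B ∪ B × A`, this says that the tail of
`sₙ := d(Tⁿx,Tⁿy)` eventually lies below every `sₘ + ε`; hence `sₙ` converges to `⨅ m, sₘ`,
which lies between `D` and `s₀ = d(x,y)`.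
-/

theorem Set.MapsTo.prodMap_prod_union_prod {X : Type*} {T : X → X} {A B : Set X}
    (hAB : MapsTo T A B) (hBA : MapsTo T B A) :
    MapsTo (Prod.map T T) (A ×ˢ B ∪ B ×ˢ A) (A ×ˢ B ∪ B ×ˢ A) :=
  union_comm (B ×ˢ A) _ ▸ (hAB.prodMap hBA).union_union (hBA.prodMap hAB)

theorem sInf_image2_dist_le_s17 {X : Type*} [PseudoMetricSpace X] {A B : Set X} {p : X × X}
    (hp : p ∈ A ×ˢ B ∪ B ×ˢ A) : sInf (image2 dist A B) ≤ dist p.1 p.2 := by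
  have hbdd : BddBelow (image2 dist A B) := ⟨0, by rintro _ ⟨a, -, b, -, rfl⟩; exact dist_nonneg⟩
  rcases hp with ⟨h₁, h₂⟩ | ⟨h₁, h₂⟩
  · exact csInf_le hbdd ⟨_, h₁, _, h₂, rfl⟩
  · exact dist_comm p.1 p.2 ▸ csInf_le hbdd ⟨_, h₂, _, h₁, rfl⟩

theorem tendsto_iInf_of_eventually_le_add {s : ℕ → ℝ} (hs : BddBelow (range s))
    (h : ∀ m, ∀ ε > 0, ∀ᶠ k in atTop, s (k + m) ≤ s m + ε) :
    Tendsto s atTop (𝓝 (⨅ m, s m)) := by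
  refine tendsto_order.2 ⟨fun a ha => .of_forall fun k => ha.trans_le (ciInf_le hs k),
    fun a ha => ?_⟩
  obtain ⟨m, hm⟩ := exists_lt_of_ciInf_lt ha
  filter_upwards [(tendsto_sub_atTop_nat m).eventually (h m ((a - s m) / 2) (by linarith)),
    eventually_ge_atTop m] with k hk hkm
  rw [Nat.sub_add_cancel hkm] at hk
  linarith

theorem eventually_lt_add_of_sq_le {ι : Type*} {l : Filter ι} {s u : ι → ℝ} {r ε : ℝ}
    (hr : 0 ≤ r) (hε : 0 < ε) (hsu : ∀ i, s i ^ 2 ≤ u i) (hu : Tendsto u l (𝓝 (r ^ 2))) :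
    ∀ᶠ i in l, s i < r + ε := by
  filter_upwards [hu.eventually_lt_const (by nlinarith : r ^ 2 < (r + ε) ^ 2)] with i hi
  exact lt_of_pow_lt_pow_left₀ 2 (by linarith) ((hsu i).trans_lt hi)

/-- `s n` and `r` stand for `d(Tⁿx,Tⁿy)` and `d(x,y)` in (C3). -/
theorem eventually_lt_add_of_c3 {s α β μ γ ξ : ℕ → ℝ} {r D ε : ℝ} (hr : 0 ≤ r) (hε : 0 < ε)
    (hβ : ∀ n, 0 < β n) (hμ : ∀ n, μ n < (1 - β n) / (2 * β n))
    (hineq : ∀ n, s n ^ 2 ≤ α n * r ^ 2 + β n * (r ^ 2 + s n ^ 2)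
      + 2 * μ n * β n * s n ^ 2 + ξ n + γ n * D ^ 2)
    (hα : Tendsto α atTop (𝓝 1)) (hβ1 : Tendsto β atTop (𝓝 1))
    (hμ1 : Tendsto μ atTop (𝓝 (-1))) (hξ : Tendsto ξ atTop (𝓝 0))
    (hγ : Tendsto γ atTop (𝓝 0)) :
    ∀ᶠ n in atTop, s n < r + ε := by
  have hc : ∀ n, 0 < 1 - β n * (1 + 2 * μ n) := fun n => by
    have := (lt_div_iff₀ (by linarith [hβ n])).1 (hμ n)
    linarith
  refine eventually_lt_add_of_sq_le hr hε (u := fun n =>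
    ((α n + β n) * r ^ 2 + ξ n + γ n * D ^ 2) / (1 - β n * (1 + 2 * μ n))) (fun n => ?_) ?_
  · rw [le_div_iff₀ (hc n)]
    linarith [hineq n]
  · have hnum := (((hα.add hβ1).mul_const (r ^ 2)).add hξ).add (hγ.mul_const (D ^ 2))
    have hden := tendsto_const_nhds (x := (1 : ℝ)) |>.sub (hβ1.mul ((hμ1.const_mul 2).const_add 1))
    have h := hnum.div hden (by norm_num)
    rwa [show ((1 + 1) * r ^ 2 + 0 + 0 * D ^ 2) / (1 - 1 * (1 + 2 * -1)) = r ^ 2 by ring] at h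

theorem thm3_5_iv_general {X : Type*} [NormedAddCommGroup X]
    (A B : Set X)
    (T : X → X) (hTA : Set.MapsTo T A B) (hTB : Set.MapsTo T B A)
    (D : ℝ) (hD : D = sInf (Set.image2 dist A B))
    (α β μ γ ξ : ℕ → X → X → ℝ)
    (hβ : ∀ n x y, (x ∈ A ∧ y ∈ B) ∨ (x ∈ B ∧ y ∈ A) → 0 < β n x y ∧ β n x y ≤ 1)
    (hμ : ∀ n x y, (x ∈ A ∧ y ∈ B) ∨ (x ∈ B ∧ y ∈ A) →
      -1 ≤ μ n x y ∧ μ n x y < (1 - β n x y) / (2 * β n x y))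
    (hineq : ∀ n x y, (x ∈ A ∧ y ∈ B) ∨ (x ∈ B ∧ y ∈ A) →
      dist (T^[n] x) (T^[n] y) ^ 2 ≤
        α n x y * dist x y ^ 2
        + β n x y * (dist x y ^ 2 + dist (T^[n] x) (T^[n] y) ^ 2)
        + 2 * μ n x y * β n x y * dist (T^[n] x) (T^[n] y) ^ 2
        + ξ n x y + γ n x y * D ^ 2)
    (hξ0 : ∀ x y, (x ∈ A ∧ y ∈ B) ∨ (x ∈ B ∧ y ∈ A) → Tendsto (fun n => ξ n x y) atTop (nhds 0))
    (hγ0 : ∀ x y, (x ∈ A ∧ y ∈ B) ∨ (x ∈ B ∧ y ∈ A) → Tendsto (fun n => γ n x y) atTop (nhds 0))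
    (hβlim : ∀ x y, (x ∈ A ∧ y ∈ B) ∨ (x ∈ B ∧ y ∈ A) → Tendsto (fun n => β n x y) atTop (nhds 1))
    (hαlim : ∀ x y, (x ∈ A ∧ y ∈ B) ∨ (x ∈ B ∧ y ∈ A) → Tendsto (fun n => α n x y) atTop (nhds 1))
    (hμlim : ∀ x y, (x ∈ A ∧ y ∈ B) ∨ (x ∈ B ∧ y ∈ A) → Tendsto (fun n => μ n x y) atTop (nhds (-1))) :
    ∀ x y : X, (x ∈ A ∧ y ∈ B) ∨ (x ∈ B ∧ y ∈ A) →
      ∃ L : ℝ, Tendsto (fun n => dist (T^[n] x) (T^[n] y)) atTop (nhds L) ∧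
        D ≤ L ∧ L ≤ dist x y := by
  intro x y hxy
  have hpair (m : ℕ) : (T^[m] x, T^[m] y) ∈ A ×ˢ B ∪ B ×ˢ A := by
    simpa [Prod.map_iterate] using (hTA.prodMap_prod_union_prod hTB).iterate m (show (x, y) ∈ A ×ˢ B ∪ B ×ˢ A from hxy)
  have hD_le (m : ℕ) : D ≤ dist (T^[m] x) (T^[m] y) := hD ▸ sInf_image2_dist_le_s17 (hpair m)
  have hbdd : BddBelow (range fun n => dist (T^[n] x) (T^[n] y)) := ⟨D, forall_mem_range.2 hD_le⟩
  have hshift (m : ℕ) (ε : ℝ) (hε : 0 < ε) : ∀ᶠ k in atTop,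
      dist (T^[k + m] x) (T^[k + m] y) ≤ dist (T^[m] x) (T^[m] y) + ε := by
    have h := hpair m
    filter_upwards [eventually_lt_add_of_c3 dist_nonneg hε (fun n => (hβ n _ _ h).1)
      (fun n => (hμ n _ _ h).2) (hineq · _ _ h) (hαlim _ _ h) (hβlim _ _ h) (hμlim _ _ h)
      (hξ0 _ _ h) (hγ0 _ _ h)] with k hk
    simpa only [Function.iterate_add_apply] using hk.le
  exact ⟨_, tendsto_iInf_of_eventually_le_add hbdd hshift, le_ciInf hD_le, ciInf_le hbdd 0⟩

/-- Theorem 3.5(iv): if `T` satisfies (C3) with `βₙ(x,y) ∈ (0,1]`, `βₙ → 1`,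
`αₙ(x,y) ∈ [1,∞)` with `αₙ → 1`, and `μₙ(x,y) → -1` (cyclic asymptotically
pseudocontractive in the intermediate sense), then `T` is asymptotically
nonexpansive: `lim_n d(Tⁿx,Tⁿy)` exists in `[D, d(x,y)]` for every pair
`(x,y) ∈ (A×B) ∪ (B×A)`. -/
theorem thm3_5_iv {X : Type*} [NormedAddCommGroup X] [NormedSpace ℝ X]
    [UniformConvexSpace X] [CompleteSpace X]
    (A B : Set X) (hA : A.Nonempty) (hB : B.Nonempty)
    (hAc : IsClosed A) (hBc : IsClosed B) (hAconv : Convex ℝ A) (hBconv : Convex ℝ B)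
    (T : X → X) (hTA : Set.MapsTo T A B) (hTB : Set.MapsTo T B A)
    (D : ℝ) (hD : D = sInf (Set.image2 dist A B))
    (α β μ γ ξ : ℕ → X → X → ℝ)
    (hα : ∀ n x y, (x ∈ A ∧ y ∈ B) ∨ (x ∈ B ∧ y ∈ A) → 0 ≤ α n x y)
    (hβ : ∀ n x y, (x ∈ A ∧ y ∈ B) ∨ (x ∈ B ∧ y ∈ A) → 0 < β n x y ∧ β n x y ≤ 1)
    (hμ : ∀ n x y, (x ∈ A ∧ y ∈ B) ∨ (x ∈ B ∧ y ∈ A) →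
      -1 ≤ μ n x y ∧ μ n x y < (1 - β n x y) / (2 * β n x y))
    (hγ : ∀ n x y, (x ∈ A ∧ y ∈ B) ∨ (x ∈ B ∧ y ∈ A) → 0 ≤ γ n x y)
    (hξdef : ∀ n x y, (x ∈ A ∧ y ∈ B) ∨ (x ∈ B ∧ y ∈ A) → ξ n x y =
      max 0 ((1 - β n x y * (1 + 2 * μ n x y)) * dist (T^[n] x) (T^[n] y) ^ 2
        - (α n x y + β n x y) * dist x y ^ 2))
    (hineq : ∀ n x y, (x ∈ A ∧ y ∈ B) ∨ (x ∈ B ∧ y ∈ A) →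
      dist (T^[n] x) (T^[n] y) ^ 2 ≤
        α n x y * dist x y ^ 2
        + β n x y * (dist x y ^ 2 + dist (T^[n] x) (T^[n] y) ^ 2)
        + 2 * μ n x y * β n x y * dist (T^[n] x) (T^[n] y) ^ 2
        + ξ n x y + γ n x y * D ^ 2)
    (hξ0 : ∀ x y, (x ∈ A ∧ y ∈ B) ∨ (x ∈ B ∧ y ∈ A) → Tendsto (fun n => ξ n x y) atTop (nhds 0))
    (hγ0 : ∀ x y, (x ∈ A ∧ y ∈ B) ∨ (x ∈ B ∧ y ∈ A) → Tendsto (fun n => γ n x y) atTop (nhds 0))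
    (hK2 : ∀ n x y, (x ∈ A ∧ y ∈ B) ∨ (x ∈ B ∧ y ∈ A) →
      (1 - α n x y - 2 * β n x y) / (2 * β n x y) ≤ μ n x y)
    (hK3 : ∀ x y, (x ∈ A ∧ y ∈ B) ∨ (x ∈ B ∧ y ∈ A) →
      Tendsto (fun n => α n x y + 2 * β n x y * (1 + μ n x y)) atTop (nhds 1))
    (hβlim : ∀ x y, (x ∈ A ∧ y ∈ B) ∨ (x ∈ B ∧ y ∈ A) → Tendsto (fun n => β n x y) atTop (nhds 1))
    (hα1 : ∀ n x y, (x ∈ A ∧ y ∈ B) ∨ (x ∈ B ∧ y ∈ A) → 1 ≤ α n x y)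
    (hαlim : ∀ x y, (x ∈ A ∧ y ∈ B) ∨ (x ∈ B ∧ y ∈ A) → Tendsto (fun n => α n x y) atTop (nhds 1))
    (hμlim : ∀ x y, (x ∈ A ∧ y ∈ B) ∨ (x ∈ B ∧ y ∈ A) → Tendsto (fun n => μ n x y) atTop (nhds (-1))) :
    ∀ x y : X, (x ∈ A ∧ y ∈ B) ∨ (x ∈ B ∧ y ∈ A) →
      ∃ L : ℝ, Tendsto (fun n => dist (T^[n] x) (T^[n] y)) atTop (nhds L) ∧
        D ≤ L ∧ L ≤ dist x y :=
  thm3_5_iv_general A B T hTA hTB D hD α β μ γ ξ hβ hμ hineq hξ0 hγ0 hβlim hαlim hμlim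
end
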